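/- arXiv:2008.05422 — 4 statements merged into one kernel-verified Lean document; each statement's English description precedes it below -/
import Mathlib

section
/- Let p, q, r be real numbers with p, q, r ≥ 2 and 1/p + 1/q + 1/r < 1. Then E(p,q,r) = cos(π/r) + cos(π/p)·cos(π/q) satisfies E(p,q,r) > sin(π/p)·sin(π/q) > 0 (so that λ(p,q,r) is a well-defined real number), and λ(p,q,r) > 1. -/
open Real

/-- `E(p,q,r) = cos(π/r) + cos(π/p)·cos(π/q)`. -/
noncomputable def triE (p q r : ℝ) : ℝ :=
  Real.cos (π / r) + Real.cos (π / p) * Real.cos (π / q)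

/-- `λ(p,q,r) = (E + √(E² − sin²(π/p)·sin²(π/q)))/(sin(π/p)·sin(π/q))`. -/
noncomputable def triLambda (p q r : ℝ) : ℝ :=
  (triE p q r +
      Real.sqrt ((triE p q r) ^ 2 - (Real.sin (π / p)) ^ 2 * (Real.sin (π / q)) ^ 2)) /
    (Real.sin (π / p) * Real.sin (π / q))

/-! The angles `π/p, π/q, π/r` are those of a hyperbolic triangle. For angles `a, b, c > 0`
with `a + b + c < π`, the monotonicity of `cos` on `[0, π]` gives
`-cos c = cos (π - c) < cos (a + b) = cos a cos b - sin a sin b`, i.e. `sin a sin b < E`;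
then `λ ≥ E / (sin a sin b) > 1`. -/

lemma pi_div_add_pi_div_add_pi_div_lt_pi {p q r : ℝ} (h : 1 / p + 1 / q + 1 / r < 1) :
    π / p + π / q + π / r < π := by
  have := mul_lt_mul_of_pos_left h pi_pos
  simpa only [mul_add, mul_one_div, mul_one] using this

lemma sin_mul_sin_lt_cos_add_cos_mul_cos {a b c : ℝ} (ha : 0 < a) (hb : 0 < b) (hc : 0 < c)
    (habc : a + b + c < π) : sin a * sin b < cos c + cos a * cos b := by
  have hcos : cos (π - c) < cos (a + b) :=
    cos_lt_cos_of_nonneg_of_le_pi (by positivity) (by linarith) (by linarith)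
  rw [cos_pi_sub, cos_add] at hcos
  linarith

lemma one_lt_add_sqrt_div {s e x : ℝ} (hs : 0 < s) (hse : s < e) : 1 < (e + √x) / s := by
  rw [lt_div_iff₀ hs, one_mul]
  linarith [sqrt_nonneg x]

lemma sin_pi_div_pos {p : ℝ} (hp : 2 ≤ p) : 0 < sin (π / p) :=
  sin_pos_of_pos_of_lt_pi (by positivity) <| by
    rw [div_lt_iff₀ (by linarith)]
    nlinarith [pi_pos]

theorem stmt_0 (p q r : ℝ) (hp : 2 ≤ p) (hq : 2 ≤ q) (hr : 2 ≤ r)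
    (h : 1 / p + 1 / q + 1 / r < 1) :
    triE p q r > Real.sin (π / p) * Real.sin (π / q) ∧
      Real.sin (π / p) * Real.sin (π / q) > 0 ∧
      triLambda p q r > 1 := by
  have hs : 0 < sin (π / p) * sin (π / q) := mul_pos (sin_pi_div_pos hp) (sin_pi_div_pos hq)
  have hE : sin (π / p) * sin (π / q) < triE p q r :=
    sin_mul_sin_lt_cos_add_cos_mul_cos (by positivity) (by positivity) (by positivity)
      (pi_div_add_pi_div_add_pi_div_lt_pi h)
  exact ⟨hE, hs, one_lt_add_sqrt_div hs hE⟩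
end

section
/- Let p, q, r be real numbers with p, q, r ≥ 2 and 1/p + 1/q + 1/r < 1, let λ = λ(p,q,r), let A, B be the associated SL(2,ℝ) matrices, and let C = B⁻¹A⁻¹. Then the following trace formulas hold: |tr(BA⁻¹)| = 2(2cos(π/p)cos(π/q) + cos(π/r)), |tr(BC⁻¹)| = 2(2cos(π/q)cos(π/r) + cos(π/p)), and |tr(AC⁻¹)| = 2(2cos(π/p)cos(π/r) + cos(π/q)). -/
open Real Matrix

/-- The matrix `A` associated to the `(p,q,r)`-triangle group. -/
noncomputable def triA (p : ℝ) : Matrix (Fin 2) (Fin 2) ℝ :=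
  !![Real.cos (π / p), -Real.sin (π / p); Real.sin (π / p), Real.cos (π / p)]

/-- The matrix `B` associated to the `(p,q,r)`-triangle group. -/
noncomputable def triB (q lam : ℝ) : Matrix (Fin 2) (Fin 2) ℝ :=
  !![Real.cos (π / q), -lam⁻¹ * Real.sin (π / q); lam * Real.sin (π / q), Real.cos (π / q)]

/-!
For `X` of determinant one, `X⁻¹ = tr X • 1 − X`, so `tr(Y X⁻¹) = tr X tr Y − tr(Y X)` and
`X² = tr X • X − 1`. Since `C⁻¹ = AB`, the three traces therefore only depend on
`tr A = 2cos(π/p)`, `tr B = 2cos(π/q)` and `tr(BA) = 2cos(π/p)cos(π/q) − sin(π/p)sin(π/q)(λ + λ⁻¹)`.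
The number `λ` is the larger root of `sin(π/p)sin(π/q)(λ + λ⁻¹) = 2E`, which is real because
`1/p + 1/q + 1/r < 1` gives `sin(π/p)sin(π/q) ≤ E`; hence `tr(BA) = −2cos(π/r)`. Finally
`p, q, r ≥ 2` makes all the cosines nonnegative, which fixes the signs inside the absolute values.
-/

namespace Matrix

variable {R : Type*} [CommRing R] {X : Matrix (Fin 2) (Fin 2) R}

theorem adjugate_fin_two_eq_trace_smul_sub (X : Matrix (Fin 2) (Fin 2) R) :
    X.adjugate = X.trace • 1 - X := by
  ext i j
  fin_cases i <;> fin_cases j <;> simp [adjugate_fin_two, trace_fin_two]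

theorem inv_fin_two_of_det_eq_one (hX : X.det = 1) : X⁻¹ = X.trace • 1 - X := by
  rw [inv_def, hX, Ring.inverse_one, one_smul, adjugate_fin_two_eq_trace_smul_sub]

theorem trace_mul_inv_fin_two_of_det_eq_one (hX : X.det = 1) (Y : Matrix (Fin 2) (Fin 2) R) :
    (Y * X⁻¹).trace = X.trace * Y.trace - (Y * X).trace := by
  rw [inv_fin_two_of_det_eq_one hX, Matrix.mul_sub, trace_sub, mul_smul_comm, mul_one,
    trace_smul, smul_eq_mul]

theorem mul_self_fin_two_of_det_eq_one (hX : X.det = 1) : X * X = X.trace • X - 1 := by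
  have h := mul_nonsing_inv X (by simp [hX])
  rw [inv_fin_two_of_det_eq_one hX, Matrix.mul_sub, mul_smul_comm, mul_one] at h
  rw [← h, sub_sub_cancel]

theorem trace_mul_self_mul_fin_two_of_det_eq_one (hX : X.det = 1) (Y : Matrix (Fin 2) (Fin 2) R) :
    (X * X * Y).trace = X.trace * (X * Y).trace - Y.trace := by
  rw [mul_self_fin_two_of_det_eq_one hX, Matrix.sub_mul, smul_mul_assoc, Matrix.one_mul,
    trace_sub, trace_smul, smul_eq_mul]

end Matrix

theorem sin_mul_sin_le_cos_add_cos_mul_cos {a b c : ℝ} (hab : 0 ≤ a + b) (hc : 0 ≤ c)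
    (h : a + b + c ≤ π) : Real.sin a * Real.sin b ≤ Real.cos c + Real.cos a * Real.cos b := by
  have hcos : Real.cos (π - (a + b)) ≤ Real.cos c :=
    Real.cos_le_cos_of_nonneg_of_le_pi hc (by linarith) (by linarith)
  rw [Real.cos_pi_sub, Real.cos_add] at hcos
  linarith

theorem div_pos_and_mul_add_inv_eq {s E : ℝ} (hs : 0 < s) (hE : s ≤ E) :
    0 < (E + √(E ^ 2 - s ^ 2)) / s ∧
      s * ((E + √(E ^ 2 - s ^ 2)) / s + ((E + √(E ^ 2 - s ^ 2)) / s)⁻¹) = 2 * E := by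
  have hd : √(E ^ 2 - s ^ 2) ^ 2 = E ^ 2 - s ^ 2 := Real.sq_sqrt (by nlinarith)
  have hpos : 0 < E + √(E ^ 2 - s ^ 2) := add_pos_of_pos_of_nonneg (by linarith) (sqrt_nonneg _)
  refine ⟨div_pos hpos hs, ?_⟩
  field_simp
  linear_combination hd

section TriangleGroup

variable {p q r : ℝ}

theorem pi_div_pos_of_two_le (hp : 2 ≤ p) : 0 < π / p :=
  div_pos pi_pos (by linarith)

theorem pi_div_le_pi_div_two_of_two_le (hp : 2 ≤ p) : π / p ≤ π / 2 :=
  div_le_div_of_nonneg_left pi_pos.le two_pos hp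

theorem sin_pi_div_pos_of_two_le (hp : 2 ≤ p) : 0 < Real.sin (π / p) :=
  Real.sin_pos_of_pos_of_lt_pi (pi_div_pos_of_two_le hp)
    ((pi_div_le_pi_div_two_of_two_le hp).trans_lt (by linarith [pi_pos]))

theorem cos_pi_div_nonneg_of_two_le (hp : 2 ≤ p) : 0 ≤ Real.cos (π / p) :=
  Real.cos_nonneg_of_mem_Icc
    ⟨by linarith [pi_div_pos_of_two_le hp, pi_pos], pi_div_le_pi_div_two_of_two_le hp⟩

theorem sin_mul_sin_le_triE (hp : 2 ≤ p) (hq : 2 ≤ q) (hr : 2 ≤ r)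
    (h : 1 / p + 1 / q + 1 / r < 1) :
    Real.sin (π / p) * Real.sin (π / q) ≤ triE p q r := by
  have hsum : π / p + π / q + π / r ≤ π := by
    simpa only [mul_add, mul_one_div, mul_one] using mul_le_mul_of_nonneg_left h.le pi_pos.le
  exact sin_mul_sin_le_cos_add_cos_mul_cos
    (by linarith [pi_div_pos_of_two_le hp, pi_div_pos_of_two_le hq])
    (pi_div_pos_of_two_le hr).le hsum

theorem triLambda_pos_and_mul_add_inv_eq (hp : 2 ≤ p) (hq : 2 ≤ q) (hr : 2 ≤ r)
    (h : 1 / p + 1 / q + 1 / r < 1) :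
    0 < triLambda p q r ∧
      Real.sin (π / p) * Real.sin (π / q) * (triLambda p q r + (triLambda p q r)⁻¹) =
        2 * triE p q r := by
  rw [triLambda, ← mul_pow]
  exact div_pos_and_mul_add_inv_eq
    (mul_pos (sin_pi_div_pos_of_two_le hp) (sin_pi_div_pos_of_two_le hq))
    (sin_mul_sin_le_triE hp hq hr h)

theorem det_triA (p : ℝ) : (triA p).det = 1 := by
  rw [triA, det_fin_two_of]
  linear_combination Real.cos_sq_add_sin_sq (π / p)

theorem det_triB {lam : ℝ} (q : ℝ) (hlam : lam ≠ 0) : (triB q lam).det = 1 := by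
  rw [triB, det_fin_two_of]
  field_simp
  linear_combination Real.cos_sq_add_sin_sq (π / q)

theorem trace_triA (p : ℝ) : (triA p).trace = 2 * Real.cos (π / p) := by
  rw [triA, trace_fin_two_of]
  ring

theorem trace_triB (q lam : ℝ) : (triB q lam).trace = 2 * Real.cos (π / q) := by
  rw [triB, trace_fin_two_of]
  ring

theorem trace_triB_mul_triA (p q lam : ℝ) :
    (triB q lam * triA p).trace = 2 * Real.cos (π / p) * Real.cos (π / q) -
      Real.sin (π / p) * Real.sin (π / q) * (lam + lam⁻¹) := by
  rw [triB, triA, mul_fin_two, trace_fin_two_of]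
  ring

theorem trace_triB_mul_triA_triLambda (hp : 2 ≤ p) (hq : 2 ≤ q) (hr : 2 ≤ r)
    (h : 1 / p + 1 / q + 1 / r < 1) :
    (triB q (triLambda p q r) * triA p).trace = -2 * Real.cos (π / r) := by
  rw [trace_triB_mul_triA, (triLambda_pos_and_mul_add_inv_eq hp hq hr h).2, triE]
  ring

end TriangleGroup

theorem stmt_8 (p q r : ℝ) (hp : 2 ≤ p) (hq : 2 ≤ q) (hr : 2 ≤ r)
    (h : 1 / p + 1 / q + 1 / r < 1)
    (A B C : Matrix (Fin 2) (Fin 2) ℝ)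
    (hA : A = triA p) (hB : B = triB q (triLambda p q r)) (hC : C = B⁻¹ * A⁻¹) :
    |(B * A⁻¹).trace| = 2 * (2 * Real.cos (π / p) * Real.cos (π / q) + Real.cos (π / r)) ∧
      |(B * C⁻¹).trace| = 2 * (2 * Real.cos (π / q) * Real.cos (π / r) + Real.cos (π / p)) ∧
      |(A * C⁻¹).trace| = 2 * (2 * Real.cos (π / p) * Real.cos (π / r) + Real.cos (π / q)) := by
  have hdetA : A.det = 1 := hA ▸ det_triA p
  have hdetB : B.det = 1 := hB ▸ det_triB q (triLambda_pos_and_mul_add_inv_eq hp hq hr h).1.ne'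
  have htrA : A.trace = 2 * Real.cos (π / p) := hA ▸ trace_triA p
  have htrB : B.trace = 2 * Real.cos (π / q) := hB ▸ trace_triB q _
  have htrBA : (B * A).trace = -2 * Real.cos (π / r) :=
    hA ▸ hB ▸ trace_triB_mul_triA_triLambda hp hq hr h
  have hCinv : C⁻¹ = A * B := by
    rw [hC, ← Matrix.mul_inv_rev, nonsing_inv_nonsing_inv _ (by simp [hdetA, hdetB])]
  have hcp := cos_pi_div_nonneg_of_two_le hp
  have hcq := cos_pi_div_nonneg_of_two_le hq
  have hcr := cos_pi_div_nonneg_of_two_le hr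
  refine ⟨?_, ?_, ?_⟩
  · rw [trace_mul_inv_fin_two_of_det_eq_one hdetA, htrA, htrB, htrBA,
      abs_of_nonneg (by nlinarith [mul_nonneg hcp hcq])]
    ring
  · rw [hCinv, ← Matrix.mul_assoc, trace_mul_cycle, trace_mul_self_mul_fin_two_of_det_eq_one hdetB,
      htrA, htrB, htrBA, abs_of_nonpos (by nlinarith [mul_nonneg hcq hcr])]
    ring
  · rw [hCinv, ← Matrix.mul_assoc, trace_mul_self_mul_fin_two_of_det_eq_one hdetA, trace_mul_comm,
      htrA, htrB, htrBA, abs_of_nonpos (by nlinarith [mul_nonneg hcp hcr])]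
    ring
end

section
/- Let q, r be real numbers with q ≥ 3 and r ≥ 4, let λ = λ(3,q,r), and let b = (√3/2)·cos(π/q) − (1/2)·λ⁻¹·sin(π/q) and c = (1/2)·λ·sin(π/q) − (√3/2)·cos(π/q) be the (1,2) and (2,1) entries of BA⁻¹. Then b ≤ c if and only if cos(π/q) ≤ cos(π/r); in particular, if 3 ≤ q ≤ r then 0 < b ≤ c, with b = c if and only if q = r. Consequently the axis of the hyperbolic element BA⁻¹ crosses the imaginary axis at the point t·i with t = √(b/c) ≤ 1, and t = 1 if and only if q = r. -/
open Real Matrix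

/-!
With `p = 3`, write `D = E² − sin²(π/3)·sin²(π/q)` for the discriminant in `λ`. Since `λ` and `λ⁻¹`
are the two roots `(E ± √D)/(sin(π/3)·sin(π/q))`, the entries become `b = (√D − d)/√3` and
`c = (√D + d)/√3` with `d = cos(π/r) − cos(π/q)`, so `c − b = 2d/√3`. Moreover
`D = d² + 3·(cos(π/q)·cos(π/r) − 1/4)`, and `cos(π/q) ≥ 1/2`, `cos(π/r) > 1/2` give `|d| < √D`,
hence `b, c > 0`. The rest is monotonicity of `cos` on `[0, π]`.
-/

lemma inv_add_sqrt_sq_sub_sq_div {E x : ℝ} (hx : x ≠ 0) (hxE : x ^ 2 ≤ E ^ 2) :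
    ((E + √(E ^ 2 - x ^ 2)) / x)⁻¹ = (E - √(E ^ 2 - x ^ 2)) / x := by
  have hprod : (E + √(E ^ 2 - x ^ 2)) * (E - √(E ^ 2 - x ^ 2)) = x ^ 2 := by
    linear_combination -Real.sq_sqrt (sub_nonneg.2 hxE)
  refine inv_eq_of_mul_eq_one_right ?_
  field_simp
  linear_combination hprod

noncomputable def triDisc (p q r : ℝ) : ℝ :=
  triE p q r ^ 2 - (Real.sin (π / p) * Real.sin (π / q)) ^ 2

lemma triLambda_eq (p q r : ℝ) :
    triLambda p q r =
      (triE p q r + √(triDisc p q r)) / (Real.sin (π / p) * Real.sin (π / q)) := by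
  rw [triLambda, triDisc, mul_pow]

lemma inv_triLambda {p q r : ℝ} (hsin : Real.sin (π / p) * Real.sin (π / q) ≠ 0)
    (hD : 0 ≤ triDisc p q r) :
    (triLambda p q r)⁻¹ =
      (triE p q r - √(triDisc p q r)) / (Real.sin (π / p) * Real.sin (π / q)) := by
  rw [triLambda_eq, triDisc]
  exact inv_add_sqrt_sq_sub_sq_div hsin (sub_nonneg.1 hD)

section ThreeQR

variable {q r : ℝ}

lemma triE_three : triE 3 q r = Real.cos (π / r) + Real.cos (π / q) / 2 := by
  rw [triE, cos_pi_div_three]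
  ring

lemma triDisc_three :
    triDisc 3 q r = (Real.cos (π / r) - Real.cos (π / q)) ^ 2 +
      3 * (Real.cos (π / q) * Real.cos (π / r) - 1 / 4) := by
  rw [triDisc, triE_three, sin_pi_div_three, mul_pow, div_pow, sq_sqrt (by norm_num : (0:ℝ) ≤ 3)]
  linear_combination (-3 / 4 : ℝ) * sin_sq_add_cos_sq (π / q)

lemma abs_cos_sub_cos_lt_sqrt_triDisc_three
    (h : 1 / 4 < Real.cos (π / q) * Real.cos (π / r)) :
    |Real.cos (π / r) - Real.cos (π / q)| < √(triDisc 3 q r) := by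
  rw [Real.lt_sqrt (abs_nonneg _), sq_abs, triDisc_three]
  linarith

lemma half_mul_triLambda_three_mul_sin_sub (hs : Real.sin (π / q) ≠ 0) :
    1 / 2 * triLambda 3 q r * Real.sin (π / q) - √3 / 2 * Real.cos (π / q) =
      (√(triDisc 3 q r) + (Real.cos (π / r) - Real.cos (π / q))) / √3 := by
  have h3 : √3 ^ 2 = 3 := sq_sqrt (by norm_num)
  rw [triLambda_eq, triE_three, sin_pi_div_three]
  field_simp
  linear_combination (-Real.cos (π / q)) * h3

lemma sub_half_mul_inv_triLambda_three_mul_sin (hs : Real.sin (π / q) ≠ 0)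
    (hD : 0 ≤ triDisc 3 q r) :
    √3 / 2 * Real.cos (π / q) - 1 / 2 * (triLambda 3 q r)⁻¹ * Real.sin (π / q) =
      (√(triDisc 3 q r) - (Real.cos (π / r) - Real.cos (π / q))) / √3 := by
  have h3 : √3 ^ 2 = 3 := sq_sqrt (by norm_num)
  have hsin3 : Real.sin (π / 3) ≠ 0 := by rw [sin_pi_div_three]; positivity
  rw [inv_triLambda (mul_ne_zero hsin3 hs) hD, triE_three, sin_pi_div_three]
  field_simp
  linear_combination Real.cos (π / q) * h3

end ThreeQR

lemma pi_div_mem_Icc {x : ℝ} (hx : 1 ≤ x) : π / x ∈ Set.Icc 0 π :=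
  ⟨div_nonneg pi_pos.le (by linarith), div_le_self pi_pos.le hx⟩

lemma cos_pi_div_le_cos_pi_div_iff {q r : ℝ} (hq : 1 ≤ q) (hr : 1 ≤ r) :
    Real.cos (π / q) ≤ Real.cos (π / r) ↔ q ≤ r := by
  rw [strictAntiOn_cos.le_iff_ge (pi_div_mem_Icc hq) (pi_div_mem_Icc hr),
    div_le_div_iff_of_pos_left pi_pos (by linarith) (by linarith)]

lemma cos_pi_div_lt_cos_pi_div_iff {q r : ℝ} (hq : 1 ≤ q) (hr : 1 ≤ r) :
    Real.cos (π / q) < Real.cos (π / r) ↔ q < r := by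
  rw [strictAntiOn_cos.lt_iff_gt (pi_div_mem_Icc hq) (pi_div_mem_Icc hr),
    div_lt_div_iff_of_pos_left pi_pos (by linarith) (by linarith)]

lemma cos_pi_div_eq_cos_pi_div_iff {q r : ℝ} (hq : 1 ≤ q) (hr : 1 ≤ r) :
    Real.cos (π / q) = Real.cos (π / r) ↔ q = r := by
  rw [le_antisymm_iff, le_antisymm_iff, cos_pi_div_le_cos_pi_div_iff hq hr,
    cos_pi_div_le_cos_pi_div_iff hr hq]

theorem stmt_11 (q r : ℝ) (hq : 3 ≤ q) (hr : 4 ≤ r)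
    (b c : ℝ)
    (hb : b = (Real.sqrt 3 / 2) * Real.cos (π / q) - (1 / 2) * (triLambda 3 q r)⁻¹ * Real.sin (π / q))
    (hc : c = (1 / 2) * triLambda 3 q r * Real.sin (π / q) - (Real.sqrt 3 / 2) * Real.cos (π / q)) :
    (b ≤ c ↔ Real.cos (π / q) ≤ Real.cos (π / r)) ∧
      (q ≤ r →
        0 < b ∧ b ≤ c ∧ (b = c ↔ q = r) ∧
          Real.sqrt (b / c) ≤ 1 ∧ (Real.sqrt (b / c) = 1 ↔ q = r)) := by
  have hq1 : (1 : ℝ) ≤ q := by linarith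
  have hr1 : (1 : ℝ) ≤ r := by linarith
  have hcq : 1 / 2 ≤ Real.cos (π / q) := by
    rw [← cos_pi_div_three]
    exact (cos_pi_div_le_cos_pi_div_iff (by norm_num) hq1).2 hq
  have hcr : 1 / 2 < Real.cos (π / r) := by
    rw [← cos_pi_div_three]
    exact (cos_pi_div_lt_cos_pi_div_iff (by norm_num) hr1).2 (by linarith)
  have hd := abs_cos_sub_cos_lt_sqrt_triDisc_three (q := q) (r := r) (by nlinarith)
  have hD : 0 < triDisc 3 q r := sqrt_pos.1 ((abs_nonneg _).trans_lt hd)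
  have hs : Real.sin (π / q) ≠ 0 :=
    (sin_pos_of_pos_of_lt_pi (by positivity) (div_lt_self pi_pos (by linarith))).ne'
  rw [sub_half_mul_inv_triLambda_three_mul_sin hs hD.le] at hb
  rw [half_mul_triLambda_three_mul_sin_sub hs] at hc
  obtain ⟨hd_lo, hd_hi⟩ := abs_lt.1 hd
  have hb0 : 0 < b := by rw [hb]; exact div_pos (by linarith) (by positivity)
  have hc0 : 0 < c := by rw [hc]; exact div_pos (by linarith) (by positivity)
  have hle : b ≤ c ↔ Real.cos (π / q) ≤ Real.cos (π / r) := by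
    rw [hb, hc, div_le_div_iff_of_pos_right (by positivity)]
    constructor <;> intro <;> linarith
  have heq : b = c ↔ q = r := by
    rw [← cos_pi_div_eq_cos_pi_div_iff hq1 hr1, hb, hc, div_left_inj' (by positivity)]
    constructor <;> intro <;> linarith
  refine ⟨hle, fun hqr => ?_⟩
  have hbc : b ≤ c := hle.2 ((cos_pi_div_le_cos_pi_div_iff hq1 hr1).2 hqr)
  refine ⟨hb0, hbc, heq, sqrt_le_one.2 ((div_le_one hc0).2 hbc), ?_⟩
  rw [sqrt_eq_one, div_eq_one_iff_eq hc0.ne', heq]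
end

section
/- For all real numbers p, q, r with p ≥ 3, q ≥ 3 and r ≥ 4, each of the three quantities 2(2cos(π/p)cos(π/q) + cos(π/r)), 2(2cos(π/q)cos(π/r) + cos(π/p)), and 2(2cos(π/p)cos(π/r) + cos(π/q)) is at least 1 + √2, and in each case equality holds if and only if p = q = 3 and r = 4. -/
/-!
For `x ≥ 1` the angle `π / x` lies in `(0, π]`, where cosine is strictly decreasing, so
`cos (π / x)` is strictly increasing in `x`. Each quantity has the shape `2 (2ab + c)` with
positive cosines `a, b`, hence is strictly increasing in each of `p, q, r`; its minimum over
`p, q ≥ 3`, `r ≥ 4` is taken only at the corner, where the cosines are `1/2, 1/2, √2/2` and the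
value is `1 + √2` in all three cases.
-/

open Real Set

/-- `|tr (BA⁻¹)|` in the `(p,q,r)`-triangle group; `|tr (BC⁻¹)|` and `|tr (AC⁻¹)|` are
`figureEightTrace q r p` and `figureEightTrace p r q`. -/
noncomputable def figureEightTrace (p q r : ℝ) : ℝ :=
  2 * (2 * cos (π / p) * cos (π / q) + cos (π / r))

lemma strictMonoOn_cos_pi_div : StrictMonoOn (fun x : ℝ => cos (π / x)) (Ici 1) := by
  intro x (hx : 1 ≤ x) y _ hxy
  have hy0 : 0 < y := by linarith
  exact cos_lt_cos_of_nonneg_of_le_pi (div_pos pi_pos hy0).le (div_le_self pi_pos.le hx)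
    (div_lt_div_of_pos_left pi_pos (by linarith) hxy)

lemma cos_pi_div_pos {x : ℝ} (hx : 2 < x) : 0 < cos (π / x) :=
  cos_pos_of_mem_Ioo ⟨by linarith [pi_pos, div_pos pi_pos (by linarith : (0 : ℝ) < x)],
    div_lt_div_of_pos_left pi_pos two_pos hx⟩

lemma mul_add_eq_mul_add_iff {a b c a₀ b₀ c₀ : ℝ} (ha₀ : 0 < a₀) (hb₀ : 0 < b₀) (ha : a₀ ≤ a)
    (hb : b₀ ≤ b) (hc : c₀ ≤ c) : a * b + c = a₀ * b₀ + c₀ ↔ a = a₀ ∧ b = b₀ ∧ c = c₀ := by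
  refine ⟨fun h => ?_, by rintro ⟨rfl, rfl, rfl⟩; rfl⟩
  have hab : a₀ * b₀ ≤ a * b := mul_le_mul ha hb hb₀.le (ha₀.le.trans ha)
  have hc' : c = c₀ := by linarith
  have hab' : a * b = a₀ * b₀ := by linarith
  have ha' : a = a₀ := by nlinarith
  subst ha'
  exact ⟨rfl, mul_left_cancel₀ ha₀.ne' hab', hc'⟩

lemma cos_pi_div_eq_cos_pi_div_iff_s13 {x y : ℝ} (hx : 1 ≤ x) (hy : 1 ≤ y) :
    cos (π / x) = cos (π / y) ↔ x = y :=
  strictMonoOn_cos_pi_div.injOn.eq_iff hx hy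

lemma cos_pi_div_le_cos_pi_div {x y : ℝ} (hx : 1 ≤ x) (hxy : x ≤ y) :
    cos (π / x) ≤ cos (π / y) :=
  strictMonoOn_cos_pi_div.monotoneOn hx (hx.trans hxy : 1 ≤ y) hxy

theorem figureEightTrace_le_and_eq_iff {p q r p₀ q₀ r₀ : ℝ} (hp₀ : 2 < p₀) (hq₀ : 2 < q₀)
    (hr₀ : 1 ≤ r₀) (hp : p₀ ≤ p) (hq : q₀ ≤ q) (hr : r₀ ≤ r) :
    figureEightTrace p₀ q₀ r₀ ≤ figureEightTrace p q r ∧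
      (figureEightTrace p q r = figureEightTrace p₀ q₀ r₀ ↔ p = p₀ ∧ q = q₀ ∧ r = r₀) := by
  have ha := cos_pi_div_le_cos_pi_div (by linarith) hp
  have hb := cos_pi_div_le_cos_pi_div (by linarith) hq
  have hc := cos_pi_div_le_cos_pi_div hr₀ hr
  have hc' : cos (π / r₀) / 2 ≤ cos (π / r) / 2 := by linarith
  have ha₀ := cos_pi_div_pos hp₀
  have hb₀ := cos_pi_div_pos hq₀
  have hle := add_le_add (mul_le_mul ha hb hb₀.le (ha₀.le.trans ha)) hc'
  have heq := mul_add_eq_mul_add_iff ha₀ hb₀ ha hb hc'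
  refine ⟨by unfold figureEightTrace; linarith, ?_⟩
  calc figureEightTrace p q r = figureEightTrace p₀ q₀ r₀
      ↔ cos (π / p) * cos (π / q) + cos (π / r) / 2
        = cos (π / p₀) * cos (π / q₀) + cos (π / r₀) / 2 := by
        unfold figureEightTrace
        constructor <;> intro h <;> linarith
    _ ↔ _ := heq
    _ ↔ p = p₀ ∧ q = q₀ ∧ r = r₀ := by
        rw [div_left_inj' two_ne_zero,
          cos_pi_div_eq_cos_pi_div_iff_s13 (by linarith : (1 : ℝ) ≤ p) (by linarith),
          cos_pi_div_eq_cos_pi_div_iff_s13 (by linarith : (1 : ℝ) ≤ q) (by linarith),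
          cos_pi_div_eq_cos_pi_div_iff_s13 (hr₀.trans hr) hr₀]

lemma figureEightTrace_three_three_four : figureEightTrace 3 3 4 = 1 + √2 := by
  simp only [figureEightTrace, cos_pi_div_three, cos_pi_div_four]
  ring

lemma figureEightTrace_three_four_three : figureEightTrace 3 4 3 = 1 + √2 := by
  simp only [figureEightTrace, cos_pi_div_three, cos_pi_div_four]
  ring

theorem stmt_13 (p q r : ℝ) (hp : 3 ≤ p) (hq : 3 ≤ q) (hr : 4 ≤ r) :
    (1 + Real.sqrt 2 ≤ 2 * (2 * Real.cos (π / p) * Real.cos (π / q) + Real.cos (π / r)) ∧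
      (2 * (2 * Real.cos (π / p) * Real.cos (π / q) + Real.cos (π / r)) = 1 + Real.sqrt 2 ↔
        p = 3 ∧ q = 3 ∧ r = 4)) ∧
    (1 + Real.sqrt 2 ≤ 2 * (2 * Real.cos (π / q) * Real.cos (π / r) + Real.cos (π / p)) ∧
      (2 * (2 * Real.cos (π / q) * Real.cos (π / r) + Real.cos (π / p)) = 1 + Real.sqrt 2 ↔
        p = 3 ∧ q = 3 ∧ r = 4)) ∧
    (1 + Real.sqrt 2 ≤ 2 * (2 * Real.cos (π / p) * Real.cos (π / r) + Real.cos (π / q)) ∧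
      (2 * (2 * Real.cos (π / p) * Real.cos (π / r) + Real.cos (π / q)) = 1 + Real.sqrt 2 ↔
        p = 3 ∧ q = 3 ∧ r = 4)) := by
  have h3 : (2 : ℝ) < 3 := by norm_num
  obtain ⟨hpqr, hpqr_eq⟩ := figureEightTrace_le_and_eq_iff h3 h3 (by norm_num) hp hq hr
  obtain ⟨hqrp, hqrp_eq⟩ := figureEightTrace_le_and_eq_iff h3 (by norm_num) (by norm_num) hq hr hp
  obtain ⟨hprq, hprq_eq⟩ := figureEightTrace_le_and_eq_iff h3 (by norm_num) (by norm_num) hp hr hq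
  rw [figureEightTrace_three_three_four] at hpqr hpqr_eq
  rw [figureEightTrace_three_four_three] at hqrp hqrp_eq hprq hprq_eq
  exact ⟨⟨hpqr, hpqr_eq⟩, ⟨hqrp, hqrp_eq.trans (by tauto)⟩, ⟨hprq, hprq_eq.trans (by tauto)⟩⟩
end
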